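/- Let ε ∈ (0,1), δ ∈ (0,1), c > 0, and let X₁,…,Xₙ be i.i.d. real random variables with mean μ > 0 and variance σ² satisfying σ²/μ² ≤ c². Let μ̂₁ > 0 be a fixed real number with |μ̂₁ − μ| ≤ √(εc²/(1+c²))·μ̂₁, set α = ε/(c²·μ̂₁), W_i = μ̂₁ + α⁻¹·Ψ(α·(X_i − μ̂₁)), and W̄ = (W₁ + ⋯ + Wₙ)/n. If n ≥ 2c²ε⁻²·ln(2/δ)/(1−ε), then P(|W̄ − μ| > εμ) ≤ δ. -/

import Mathlib

open MeasureTheory ProbabilityTheory Real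

/-- The Catoni-style influence function: `Ψ(u) = ln(1 + u + u²/2)` for `u ≥ 0`
and `Ψ(u) = -ln(1 - u + u²/2)` for `u ≤ 0` (both branches vanish at `0`). -/
noncomputable def Psi (u : ℝ) : ℝ :=
  if 0 ≤ u then Real.log (1 + u + u ^ 2 / 2) else -Real.log (1 - u + u ^ 2 / 2)

lemma psi_arg_pos (u : ℝ) : 0 < 1 + u + u ^ 2 / 2 := by nlinarith [sq_nonneg (u + 1)]
lemma psi_arg_pos' (u : ℝ) : 0 < 1 - u + u ^ 2 / 2 := by nlinarith [sq_nonneg (u - 1)]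

lemma measurable_Psi : Measurable Psi := by
  unfold Psi
  exact Measurable.ite (measurableSet_le measurable_const measurable_id)
    (Real.measurable_log.comp (by fun_prop))
    ((Real.measurable_log.comp (by fun_prop)).neg)

lemma key_prod (u : ℝ) : 1 ≤ (1 + u + u ^ 2 / 2) * (1 - u + u ^ 2 / 2) := by
  nlinarith [sq_nonneg (u ^ 2)]

lemma exp_Psi_le (u : ℝ) : Real.exp (Psi u) ≤ 1 + u + u ^ 2 / 2 := by
  unfold Psi
  split_ifs with h
  · rw [Real.exp_log (psi_arg_pos u)]
  · rw [Real.exp_neg, Real.exp_log (psi_arg_pos' u)]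
    rw [inv_le_iff_one_le_mul₀ (psi_arg_pos' u)]
    exact key_prod u

lemma exp_neg_Psi_le (u : ℝ) : Real.exp (-Psi u) ≤ 1 - u + u ^ 2 / 2 := by
  unfold Psi
  split_ifs with h
  · rw [Real.exp_neg, Real.exp_log (psi_arg_pos u)]
    rw [inv_le_iff_one_le_mul₀ (psi_arg_pos u)]
    nlinarith [key_prod u]
  · rw [neg_neg, Real.exp_log (psi_arg_pos' u)]

set_option maxHeartbeats 2000000 in
/-- Second step of the algorithm: if the preliminary estimate `μ̂₁ > 0` satisfies
`|μ̂₁ - μ| ≤ √(εc²/(1+c²))·μ̂₁` and `n ≥ 2c²ε⁻²ln(2/δ)/(1-ε)`, then the average `W̄` of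
the robustified samples `Wᵢ = μ̂₁ + α⁻¹Ψ(α(Xᵢ - μ̂₁))` with `α = ε/(c²μ̂₁)` satisfies
`P(|W̄ - μ| > εμ)  ≤ δ`. -/
theorem catoni_step_two
    {Ω : Type*} [MeasurableSpace Ω] (P : Measure Ω) [IsProbabilityMeasure P]
    (n : ℕ) (c ε δ μ σ μhat₁ : ℝ) (hc : 0 < c)
    (hε : ε ∈ Set.Ioo (0:ℝ) 1) (hδ : δ ∈ Set.Ioo (0:ℝ) 1) (hμ : 0 < μ)
    (hμhat₁ : 0 < μhat₁)
    (X : Fin n → Ω → ℝ)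
    (hmeas : ∀ i, Measurable (X i))
    (hindep : iIndepFun X P)
    (hident : ∀ i j, IdentDistrib (X i) (X j) P P)
    (hL2 : ∀ i, MemLp (X i) 2 P)
    (hmean : ∀ i, (∫ ω, X i ω ∂P) = μ)
    (hvar : ∀ i, variance (X i) P = σ ^ 2)
    (hrel : σ ^ 2 / μ ^ 2 ≤ c ^ 2)
    (hμhat₁close : |μhat₁ - μ| ≤ Real.sqrt (ε * c ^ 2 / (1 + c ^ 2)) * μhat₁)
    (hn : 2 * c ^ 2 * ε⁻¹ ^ 2 * Real.log (2 / δ) / (1 - ε) ≤ (n : ℝ)) :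
    P {ω | ε * μ <
        |(∑ i, (μhat₁ + (ε / (c ^ 2 * μhat₁))⁻¹ *
          Psi (ε / (c ^ 2 * μhat₁) * (X i ω - μhat₁)))) / n - μ|} ≤
      ENNReal.ofReal δ := by
  obtain ⟨hε0, hε1⟩ := hε
  obtain ⟨hδ0, hδ1⟩ := hδ
  set α : ℝ := ε / (c ^ 2 * μhat₁) with hα_def
  have hα : 0 < α := div_pos hε0 (by positivity)
  have hlog : 0 < Real.log (2 / δ) := Real.log_pos (by rw [lt_div_iff₀ hδ0]; linarith)
  have hn0 : 0 < (n : ℝ) := by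
    refine lt_of_lt_of_le ?_ hn
    apply div_pos
    · have : (0:ℝ) < ε⁻¹ ^ 2 := by positivity
      positivity
    · linarith
  -- integrability basics
  have hIntX : ∀ i, Integrable (X i) P := fun i => (hL2 i).integrable one_le_two
  have hXm : ∀ i, Integrable (fun ω => X i ω - μhat₁) P :=
    fun i => (hIntX i).sub (integrable_const _)
  have hIntSq : ∀ i, Integrable (fun ω => (X i ω - μhat₁) ^ 2) P := fun i =>
    ((hL2 i).sub (memLp_const μhat₁)).integrable_sq
  have hXmInt : ∀ i, ∫ ω, (X i ω - μhat₁) ∂P = μ - μhat₁ := by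
    intro i
    rw [integral_sub (hIntX i) (integrable_const _), hmean i, integral_const,
      probReal_univ, one_smul]
  have hvarInt : ∀ i, ∫ ω, (X i ω - μ) ^ 2 ∂P = σ ^ 2 := by
    intro i
    have h := variance_eq_integral (μ := P) (hmeas i).aemeasurable
    rw [hvar i, hmean i] at h
    exact (h.symm : _)
  have hsecond : ∀ i, ∫ ω, (X i ω - μhat₁) ^ 2 ∂P = σ ^ 2 + (μ - μhat₁) ^ 2 := by
    intro i
    have h2 : Integrable (fun ω => (X i ω - μ) ^ 2) P :=
      ((hL2 i).sub (memLp_const μ)).integrable_sq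
    have h2' : Integrable (fun ω => X i ω - μ) P := (hIntX i).sub (integrable_const _)
    have e : (fun ω => (X i ω - μhat₁) ^ 2) =
        fun ω => (X i ω - μ) ^ 2 + (2 * (μ - μhat₁) * (X i ω - μ) + (μ - μhat₁) ^ 2) := by
      funext ω; ring
    have hB : Integrable (fun ω => 2 * (μ - μhat₁) * (X i ω - μ) + (μ - μhat₁) ^ 2) P :=
      (h2'.const_mul _).add (integrable_const _)
    rw [e, integral_add h2 hB]
    have hB2 : ∫ ω, (2 * (μ - μhat₁) * (X i ω - μ) + (μ - μhat₁) ^ 2) ∂P = (μ - μhat₁) ^ 2 := by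
      rw [integral_add (h2'.const_mul _) (integrable_const _), integral_const_mul _ _,
        integral_sub (hIntX i) (integrable_const _), hmean i, integral_const, integral_const,
        probReal_univ, one_smul, one_smul]
      ring
    rw [hB2, hvarInt i]
  -- the transformed variables
  set Y : Fin n → Ω → ℝ := fun i ω => Psi (α * (X i ω - μhat₁)) with hY_def
  have hYmeas : ∀ i, Measurable (Y i) := fun i =>
    measurable_Psi.comp (((hmeas i).sub_const _).const_mul α)
  have hYindep : iIndepFun Y P :=
    hindep.comp (fun _ x => Psi (α * (x - μhat₁)))
      (fun _ => measurable_Psi.comp (by fun_prop))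
  -- quadratic dominators
  have hQint : ∀ i, Integrable
      (fun ω => 1 + α * (X i ω - μhat₁) + (α * (X i ω - μhat₁)) ^ 2 / 2) P := by
    intro i
    have e : (fun ω => 1 + α * (X i ω - μhat₁) + (α * (X i ω - μhat₁)) ^ 2 / 2)
        = fun ω => (1 + α * (X i ω - μhat₁)) + (α ^ 2 / 2) * (X i ω - μhat₁) ^ 2 := by
      funext ω; ring
    rw [e]
    exact ((integrable_const 1).add ((hXm i).const_mul α)).add ((hIntSq i).const_mul _)
  have hQint' : ∀ i, Integrable
      (fun ω => 1 - α * (X i ω - μhat₁) + (α * (X i ω - μhat₁)) ^ 2 / 2) P := by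
    intro i
    have e : (fun ω => 1 - α * (X i ω - μhat₁) + (α * (X i ω - μhat₁)) ^ 2 / 2)
        = fun ω => (1 + (-α) * (X i ω - μhat₁)) + (α ^ 2 / 2) * (X i ω - μhat₁) ^ 2 := by
      funext ω; ring
    rw [e]
    exact ((integrable_const 1).add ((hXm i).const_mul _)).add ((hIntSq i).const_mul _)
  have hEQ : ∀ i, ∫ ω, (1 + α * (X i ω - μhat₁) + (α * (X i ω - μhat₁)) ^ 2 / 2) ∂P
      = 1 + α * (μ - μhat₁) + α ^ 2 * (σ ^ 2 + (μ - μhat₁) ^ 2) / 2 := by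
    intro i
    have e : (fun ω => 1 + α * (X i ω - μhat₁) + (α * (X i ω - μhat₁)) ^ 2 / 2)
        = fun ω => (1 + α * (X i ω - μhat₁)) + (α ^ 2 / 2) * (X i ω - μhat₁) ^ 2 := by
      funext ω; ring
    have hI1 : Integrable (fun ω => 1 + α * (X i ω - μhat₁)) P :=
      (integrable_const 1).add ((hXm i).const_mul α)
    have hI2 : Integrable (fun ω => (α ^ 2 / 2) * (X i ω - μhat₁) ^ 2) P :=
      (hIntSq i).const_mul _
    rw [e, integral_add hI1 hI2, integral_add (integrable_const 1) ((hXm i).const_mul α),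
      integral_const_mul _ _, integral_const_mul _ _, hXmInt i, hsecond i, integral_const,
      probReal_univ, one_smul]
    ring
  have hEQ' : ∀ i, ∫ ω, (1 - α * (X i ω - μhat₁) + (α * (X i ω - μhat₁)) ^ 2 / 2) ∂P
      = 1 + (-α) * (μ - μhat₁) + α ^ 2 * (σ ^ 2 + (μ - μhat₁) ^ 2) / 2 := by
    intro i
    have e : (fun ω => 1 - α * (X i ω - μhat₁) + (α * (X i ω - μhat₁)) ^ 2 / 2)
        = fun ω => (1 + (-α) * (X i ω - μhat₁)) + (α ^ 2 / 2) * (X i ω - μhat₁) ^ 2 := by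
      funext ω; ring
    have hI1 : Integrable (fun ω => 1 + (-α) * (X i ω - μhat₁)) P :=
      (integrable_const 1).add ((hXm i).const_mul _)
    have hI2 : Integrable (fun ω => (α ^ 2 / 2) * (X i ω - μhat₁) ^ 2) P :=
      (hIntSq i).const_mul _
    rw [e, integral_add hI1 hI2, integral_add (integrable_const 1) ((hXm i).const_mul (-α)),
      integral_const_mul _ _, integral_const_mul _ _, hXmInt i, hsecond i, integral_const,
      probReal_univ, one_smul]
    ring
  -- integrability of exponentials
  have hexpY_int : ∀ i, Integrable (fun ω => exp (1 * Y i ω)) P := by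
    intro i
    refine Integrable.mono' (hQint i)
      (((hYmeas i).const_mul 1).exp.aestronglyMeasurable) (ae_of_all _ fun ω => ?_)
    rw [Real.norm_eq_abs, abs_of_pos (exp_pos _), one_mul]
    exact exp_Psi_le _
  have hexpYneg_int : ∀ i, Integrable (fun ω => exp ((-1) * Y i ω)) P := by
    intro i
    refine Integrable.mono' (hQint' i)
      (((hYmeas i).const_mul (-1)).exp.aestronglyMeasurable) (ae_of_all _ fun ω => ?_)
    rw [Real.norm_eq_abs, abs_of_pos (exp_pos _), neg_one_mul]
    exact exp_neg_Psi_le _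
  -- moment bounds
  set v : ℝ := σ ^ 2 + (μ - μhat₁) ^ 2 with hv_def
  set B1 : ℝ := α * (μ - μhat₁) + α ^ 2 * v / 2 with hB1_def
  set B2 : ℝ := (-α) * (μ - μhat₁) + α ^ 2 * v / 2 with hB2_def
  have hmgf1 : ∀ i, mgf (Y i) P 1 ≤ exp B1 := by
    intro i
    have h1 : mgf (Y i) P 1 ≤ 1 + B1 := by
      rw [mgf]
      have := integral_mono (hexpY_int i) (hQint i)
        (fun ω => by simpa using exp_Psi_le (α * (X i ω - μhat₁)))
      rw [hEQ i] at this
      rw [hB1_def]; linarith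
    have h2 := Real.add_one_le_exp B1
    linarith
  have hmgf2 : ∀ i, mgf (Y i) P (-1) ≤ exp B2 := by
    intro i
    have h1 : mgf (Y i) P (-1) ≤ 1 + B2 := by
      rw [mgf]
      have := integral_mono (hexpYneg_int i) (hQint' i)
        (fun ω => by
          simpa [neg_one_mul] using exp_neg_Psi_le (α * (X i ω - μhat₁)))
      rw [hEQ' i] at this
      rw [hB2_def]; linarith
    have h2 := Real.add_one_le_exp B2
    linarith
  have hmgfS1 : mgf (∑ i, Y i) P 1 ≤ exp ((n:ℝ) * B1) := by
    rw [hYindep.mgf_sum hYmeas]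
    calc (∏ i, mgf (Y i) P 1) ≤ ∏ _i : Fin n, exp B1 :=
          Finset.prod_le_prod (fun i _ => mgf_nonneg) (fun i _ => hmgf1 i)
      _ = exp ((n:ℝ) * B1) := by
          rw [Finset.prod_const, Finset.card_univ, Fintype.card_fin, ← Real.exp_nat_mul]
  have hmgfS2 : mgf (∑ i, Y i) P (-1) ≤ exp ((n:ℝ) * B2) := by
    rw [hYindep.mgf_sum hYmeas]
    calc (∏ i, mgf (Y i) P (-1)) ≤ ∏ _i : Fin n, exp B2 :=
          Finset.prod_le_prod (fun i _ => mgf_nonneg) (fun i _ => hmgf2 i)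
      _ = exp ((n:ℝ) * B2) := by
          rw [Finset.prod_const, Finset.card_univ, Fintype.card_fin, ← Real.exp_nat_mul]
  -- key arithmetic
  set K : ℝ := α * (ε * μ) - α ^ 2 * v / 2 with hK_def
  have hσ2 : σ ^ 2 ≤ c ^ 2 * μ ^ 2 := by
    rw [div_le_iff₀ (by positivity)] at hrel; linarith
  have hs_nonneg : (0:ℝ) ≤ ε * c ^ 2 / (1 + c ^ 2) := by positivity
  have hm2 : (μ - μhat₁) ^ 2 * (1 + c ^ 2) ≤ ε * c ^ 2 * μhat₁ ^ 2 := by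
    have h5 : (0:ℝ) < 1 + c ^ 2 := by positivity
    have h2 := mul_self_le_mul_self (abs_nonneg (μhat₁ - μ)) hμhat₁close
    rw [abs_mul_abs_self] at h2
    have h7 : Real.sqrt (ε * c ^ 2 / (1 + c ^ 2)) * μhat₁ *
        (Real.sqrt (ε * c ^ 2 / (1 + c ^ 2)) * μhat₁)
        = ε * c ^ 2 * μhat₁ ^ 2 / (1 + c ^ 2) := by
      have h3 := Real.mul_self_sqrt hs_nonneg
      linear_combination (μhat₁ ^ 2) * h3
    rw [h7] at h2
    have h8 : (μ - μhat₁) ^ 2 ≤ ε * c ^ 2 * μhat₁ ^ 2 / (1 + c ^ 2) := by linarith [h2, sq_abs (μ - μhat₁), abs_mul_abs_self (μ - μhat₁)]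
    exact (le_div_iff₀ h5).mp h8
  have hclear : (1 - ε) * (c ^ 2 * μhat₁ ^ 2) ≤
      2 * c ^ 2 * μ * μhat₁ - σ ^ 2 - (μ - μhat₁) ^ 2 := by linarith only [hσ2, hm2]
  have hKeq : K = ε ^ 2 / (2 * c ^ 4 * μhat₁ ^ 2) *
      (2 * c ^ 2 * μ * μhat₁ - σ ^ 2 - (μ - μhat₁) ^ 2) := by
    rw [hK_def, hα_def, hv_def]; field_simp; ring
  have hKlb : ε ^ 2 * (1 - ε) / (2 * c ^ 2) ≤ K := by
    rw [hKeq]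
    have e2 : ε ^ 2 * (1 - ε) / (2 * c ^ 2)
        = ε ^ 2 / (2 * c ^ 4 * μhat₁ ^ 2) * ((1 - ε) * (c ^ 2 * μhat₁ ^ 2)) := by
      field_simp
    rw [e2]
    exact mul_le_mul_of_nonneg_left hclear (by positivity)
  have hk0 : (0:ℝ) < ε ^ 2 * (1 - ε) / (2 * c ^ 2) :=
    div_pos (mul_pos (by positivity) (by linarith)) (by positivity)
  have hnK : Real.log (2 / δ) ≤ (n:ℝ) * K := by
    have hne : 2 * c ^ 2 * ε⁻¹ ^ 2 * Real.log (2 / δ) / (1 - ε)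
        = Real.log (2 / δ) / (ε ^ 2 * (1 - ε) / (2 * c ^ 2)) := by
      rw [div_div_eq_mul_div]
      field_simp
    rw [hne, div_le_iff₀ hk0] at hn
    calc Real.log (2 / δ) ≤ (n:ℝ) * (ε ^ 2 * (1 - ε) / (2 * c ^ 2)) := hn
      _ ≤ (n:ℝ) * K := mul_le_mul_of_nonneg_left hKlb hn0.le
  -- Chernoff bounds
  set a : ℝ := (n:ℝ) * α * (ε * μ + (μ - μhat₁)) with ha_def
  set b : ℝ := (n:ℝ) * α * ((μ - μhat₁) - ε * μ) with hb_def
  have hSint1 : Integrable (fun ω => exp (1 * (∑ i, Y i) ω)) P :=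
    hYindep.integrable_exp_mul_sum hYmeas (fun i _ => hexpY_int i)
  have hSint2 : Integrable (fun ω => exp ((-1) * (∑ i, Y i) ω)) P :=
    hYindep.integrable_exp_mul_sum hYmeas (fun i _ => hexpYneg_int i)
  have hδ2 : Real.exp (-Real.log (2 / δ)) = δ / 2 := by
    rw [Real.exp_neg, Real.exp_log (by positivity), inv_div]
  have hA : (P {ω | a ≤ (∑ i, Y i) ω}).toReal ≤ δ / 2 := by
    refine (measure_ge_le_exp_mul_mgf a zero_le_one hSint1).trans ?_
    calc exp (-1 * a) * mgf (∑ i, Y i) P 1 ≤ exp (-1 * a) * exp ((n:ℝ) * B1) := by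
          exact mul_le_mul_of_nonneg_left hmgfS1 (exp_pos _).le
      _ = exp ((n:ℝ) * B1 + -1 * a) := by rw [← Real.exp_add]; congr 1; ring
      _ ≤ exp (-Real.log (2 / δ)) := by
          apply Real.exp_le_exp.mpr
          have : (n:ℝ) * B1 + -1 * a = -((n:ℝ) * K) := by
            rw [hB1_def, ha_def, hK_def]; ring
          rw [this]; linarith
      _ = δ / 2 := hδ2
  have hB : (P {ω | (∑ i, Y i) ω ≤ b}).toReal ≤ δ / 2 := by
    refine (measure_le_le_exp_mul_mgf b (by norm_num : (-1:ℝ) ≤ 0) hSint2).trans ?_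
    calc exp (-(-1) * b) * mgf (∑ i, Y i) P (-1)
          ≤ exp (-(-1) * b) * exp ((n:ℝ) * B2) := by
          exact mul_le_mul_of_nonneg_left hmgfS2 (exp_pos _).le
      _ = exp ((n:ℝ) * B2 + -(-1) * b) := by rw [← Real.exp_add]; congr 1; ring
      _ ≤ exp (-Real.log (2 / δ)) := by
          apply Real.exp_le_exp.mpr
          have : (n:ℝ) * B2 + -(-1) * b = -((n:ℝ) * K) := by
            rw [hB2_def, hb_def, hK_def]; ring
          rw [this]; linarith
      _ = δ / 2 := hδ2
  have hPA : P {ω | a ≤ (∑ i, Y i) ω} ≤ ENNReal.ofReal (δ / 2) := by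
    rw [← ENNReal.ofReal_toReal (measure_ne_top P _)]
    exact ENNReal.ofReal_le_ofReal hA
  have hPB : P {ω | (∑ i, Y i) ω ≤ b} ≤ ENNReal.ofReal (δ / 2) := by
    rw [← ENNReal.ofReal_toReal (measure_ne_top P _)]
    exact ENNReal.ofReal_le_ofReal hB
  -- event inclusion
  have hsub : {ω | ε * μ <
        |(∑ i, (μhat₁ + α⁻¹ * Psi (α * (X i ω - μhat₁)))) / (n:ℝ) - μ|} ⊆
      {ω | a ≤ (∑ i, Y i) ω} ∪ {ω | (∑ i, Y i) ω ≤ b} := by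
    intro ω hω
    simp only [Set.mem_setOf_eq, Set.mem_union] at hω ⊢
    have hsum : (∑ i, (μhat₁ + α⁻¹ * Psi (α * (X i ω - μhat₁))))
        = (n:ℝ) * μhat₁ + α⁻¹ * (∑ i, Y i) ω := by
      rw [Finset.sum_apply, Finset.sum_add_distrib, Finset.sum_const, Finset.card_univ,
        Fintype.card_fin, ← Finset.mul_sum, nsmul_eq_mul]
    rw [hsum] at hω
    set s : ℝ := (∑ i, Y i) ω with hs_def
    have hαinv : α * (α⁻¹ * s) = s := by
      rw [← mul_assoc, mul_inv_cancel₀ hα.ne', one_mul]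
    rcases lt_abs.mp hω with h | h
    · left
      have h2 : (ε * μ + μ) * (n:ℝ) < (n:ℝ) * μhat₁ + α⁻¹ * s :=
        (lt_div_iff₀ hn0).mp (by linarith)
      have h3 := mul_lt_mul_of_pos_left h2 hα
      rw [ha_def]
      linarith only [h3, hαinv]
    · right
      have h2 : (n:ℝ) * μhat₁ + α⁻¹ * s < (μ - ε * μ) * (n:ℝ) := by
        rw [← div_lt_iff₀ hn0]; linarith
      have h3 := mul_lt_mul_of_pos_left h2 hα
      rw [hb_def]
      linarith only [h3, hαinv]
  calc P {ω | ε * μ <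
        |(∑ i, (μhat₁ + α⁻¹ * Psi (α * (X i ω - μhat₁)))) / (n:ℝ) - μ|}
      ≤ P ({ω | a ≤ (∑ i, Y i) ω} ∪ {ω | (∑ i, Y i) ω ≤ b}) := measure_mono hsub
    _ ≤ P {ω | a ≤ (∑ i, Y i) ω} + P {ω | (∑ i, Y i) ω ≤ b} := measure_union_le _ _
    _ ≤ ENNReal.ofReal (δ / 2) + ENNReal.ofReal (δ / 2) := add_le_add hPA hPB
    _ = ENNReal.ofReal δ := by
        rw [← ENNReal.ofReal_add (by positivity) (by positivity)]; norm_num
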